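/- arXiv:0908.3629 — 5 statements merged into one kernel-verified Lean document; each statement's English description precedes it below -/
import Mathlib

section
/- Let E ~ Exp(1/2) and G ~ Gamma(1/2, 1/2) be independent random variables. Then √(E·G) has the exponential distribution with rate 1, i.e. √(E·G) ~ Exp(1). -/
/-! For `t ≥ 0`, conditioning on `G = y > 0` gives `P(√(E G) > t | G = y) = exp(-t²/(2y))`, so the
claim is that `exp(-t²/(2G))` has expectation `exp(-t)` under `Gamma(1/2, 1/2)`. Substituting
`y = x²` turns this expectation into a multiple of `∫_{x>0} exp(-(x² + t²/x²)/2) dx`, and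
`x² + t²/x² = (x - t/x)² + 2t`. The Cauchy–Schlömilch substitution `u = x - t/x` shows that
`∫_{x>0} g(x - t/x) dx = ½ ∫ g` for every even `g`, which reduces everything to the Gaussian
integral. -/

open MeasureTheory ProbabilityTheory Real Set
open scoped ENNReal

theorem lintegral_eq_two_mul_setLIntegral_Ioi_of_even {g : ℝ → ℝ≥0∞} (hg : ∀ u, g (-u) = g u) :
    ∫⁻ u, g u = 2 * ∫⁻ x in Ioi 0, g x := by
  have hneg : ∫⁻ x in Iic 0, g x = ∫⁻ x in Ioi 0, g x := by
    calc ∫⁻ x in Iic 0, g x = ∫⁻ x in Iio 0, g x := setLIntegral_congr Iio_ae_eq_Iic.symm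
      _ = ∫⁻ x in Neg.neg '' Ioi 0, g x := by rw [image_neg_Ioi, neg_zero]
      _ = ∫⁻ x in Ioi 0, g x := by
        rw [lintegral_image_eq_lintegral_abs_deriv_mul measurableSet_Ioi
          (fun x _ => (hasDerivAt_neg x).hasDerivWithinAt) neg_injective.injOn]
        simp [hg]
  rw [← lintegral_add_compl (μ := volume) g measurableSet_Ioi, compl_Ioi, hneg, two_mul]

theorem injOn_sub_div_Ioi {c : ℝ} (hc : 0 ≤ c) : InjOn (fun x => x - c / x) (Ioi 0) := by
  intro x (hx : 0 < x) y (hy : 0 < y) h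
  field_simp at h
  nlinarith [mul_pos hx hy]

theorem image_sub_div_Ioi {c : ℝ} (hc : 0 < c) : (fun x => x - c / x) '' Ioi 0 = univ := by
  refine eq_univ_of_forall fun u => ?_
  -- the positive root of `x² - u x - c`
  set x := (u + √(u ^ 2 + 4 * c)) / 2
  have hsq : √(u ^ 2 + 4 * c) ^ 2 = u ^ 2 + 4 * c := sq_sqrt (by positivity)
  have hlt : |u| < √(u ^ 2 + 4 * c) := by
    rw [← sqrt_sq_eq_abs]; exact sqrt_lt_sqrt (sq_nonneg u) (by linarith)
  have hx : 0 < x := by have := neg_abs_le u; simp only [x]; linarith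
  refine ⟨x, hx, ?_⟩
  field_simp
  simp only [x]
  nlinarith

/-- Cauchy–Schlömilch. The Jacobian of `x ↦ x - c/x` is `1 + c/x²`, and `x ↦ c/x` carries the
`c/x²` part onto the `1` part, since it sends `x - c/x` to its negative. -/
theorem lintegral_eq_two_mul_setLIntegral_Ioi_comp_sub_div {g : ℝ → ℝ≥0∞} (hg_meas : Measurable g)
    (hg : ∀ u, g (-u) = g u) {c : ℝ} (hc : 0 ≤ c) :
    ∫⁻ u, g u = 2 * ∫⁻ x in Ioi 0, g (x - c / x) := by
  rcases hc.eq_or_lt with rfl | hc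
  · simpa using lintegral_eq_two_mul_setLIntegral_Ioi_of_even hg
  set φ : ℝ → ℝ := fun x => x - c / x with hφ
  have hψ_deriv : ∀ w ∈ Ioi (0 : ℝ), HasDerivWithinAt (c / ·) (-(c / w ^ 2)) (Ioi 0) w := by
    intro w hw
    simpa [div_eq_mul_inv] using ((hasDerivAt_inv (ne_of_gt hw)).const_mul c).hasDerivWithinAt
  have hφ_deriv : ∀ x ∈ Ioi (0 : ℝ), HasDerivWithinAt φ (1 + c / x ^ 2) (Ioi 0) x := fun x hx =>
    ((hasDerivWithinAt_id x _).sub (hψ_deriv x hx)).congr_deriv (by ring)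
  have hψ_inj : InjOn (c / ·) (Ioi (0 : ℝ)) := fun x _ y _ h => by
    simpa [div_div_cancel₀ hc.ne'] using congrArg (c / ·) h
  have hψ_image : (c / ·) '' Ioi (0 : ℝ) = Ioi 0 := by
    refine Subset.antisymm (image_subset_iff.2 fun w hw => div_pos hc hw) fun x hx => ?_
    exact ⟨c / x, div_pos hc hx, div_div_cancel₀ hc.ne'⟩
  have hreflect :
      ∫⁻ x in Ioi 0, ENNReal.ofReal (c / x ^ 2) * g (φ x) = ∫⁻ x in Ioi 0, g (φ x) := by
    conv_rhs => rw [← hψ_image]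
    rw [lintegral_image_eq_lintegral_abs_deriv_mul measurableSet_Ioi hψ_deriv hψ_inj]
    refine setLIntegral_congr_fun measurableSet_Ioi fun w _ => ?_
    have : φ (c / w) = -φ w := by simp only [hφ, div_div_cancel₀ hc.ne']; ring
    rw [this, hg, abs_neg, abs_of_nonneg (by positivity)]
  calc ∫⁻ u, g u = ∫⁻ x in Ioi 0, ENNReal.ofReal |1 + c / x ^ 2| * g (φ x) := by
        rw [← lintegral_image_eq_lintegral_abs_deriv_mul measurableSet_Ioi hφ_deriv
          (injOn_sub_div_Ioi hc.le), image_sub_div_Ioi hc, Measure.restrict_univ]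
    _ = (∫⁻ x in Ioi 0, g (φ x)) + ∫⁻ x in Ioi 0, ENNReal.ofReal (c / x ^ 2) * g (φ x) := by
        have hgφ : Measurable fun x => g (φ x) := hg_meas.comp (by fun_prop)
        rw [← lintegral_add_left hgφ]
        refine setLIntegral_congr_fun measurableSet_Ioi fun x _ => ?_
        rw [abs_of_pos (by positivity), ENNReal.ofReal_add zero_le_one (by positivity),
          ENNReal.ofReal_one, add_mul, one_mul]
    _ = 2 * ∫⁻ x in Ioi 0, g (φ x) := by rw [hreflect, two_mul]

theorem lintegral_exp_neg_sq_div_two :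
    ∫⁻ u : ℝ, ENNReal.ofReal (exp (-u ^ 2 / 2)) = ENNReal.ofReal √(2 * π) := by
  have h := integral_gaussian (1 / 2)
  simp_rw [show ∀ u : ℝ, -(1 / 2) * u ^ 2 = -u ^ 2 / 2 by intro u; ring] at h
  rw [← ofReal_integral_eq_lintegral_ofReal, h]
  · norm_num [div_div_eq_mul_div, mul_comm]
  · simpa [div_eq_inv_mul, neg_mul, ← neg_div] using
      integrable_exp_neg_mul_sq (b := 1 / 2) (by norm_num)
  · exact ae_of_all _ fun u => (exp_pos _).le

theorem two_mul_setLIntegral_Ioi_exp_neg_sq_add_sq_div_sq {t : ℝ} (ht : 0 ≤ t) :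
    2 * ∫⁻ x in Ioi 0, ENNReal.ofReal (exp (-(x ^ 2 + t ^ 2 / x ^ 2) / 2))
      = ENNReal.ofReal (√(2 * π) * exp (-t)) := by
  have hsplit : ∀ x ∈ Ioi (0 : ℝ), ENNReal.ofReal (exp (-(x ^ 2 + t ^ 2 / x ^ 2) / 2))
      = ENNReal.ofReal (exp (-(x - t / x) ^ 2 / 2)) * ENNReal.ofReal (exp (-t)) := by
    intro x (hx : 0 < x)
    rw [← ENNReal.ofReal_mul (exp_pos _).le, ← exp_add]
    congr 2
    field_simp
    ring
  rw [setLIntegral_congr_fun measurableSet_Ioi hsplit, lintegral_mul_const _ (by fun_prop),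
    ← mul_assoc, ← lintegral_eq_two_mul_setLIntegral_Ioi_comp_sub_div
      (g := fun u => ENNReal.ofReal (exp (-u ^ 2 / 2))) (by fun_prop) (by simp) ht,
    lintegral_exp_neg_sq_div_two, ← ENNReal.ofReal_mul (sqrt_nonneg _)]

theorem setLIntegral_Ioi_eq_setLIntegral_Ioi_comp_sq (f : ℝ → ℝ≥0∞) :
    ∫⁻ y in Ioi 0, f y = ∫⁻ x in Ioi 0, ENNReal.ofReal (2 * x) * f (x ^ 2) := by
  have hsq_deriv : ∀ x ∈ Ioi (0 : ℝ), HasDerivWithinAt (· ^ 2) (2 * x) (Ioi 0) x := fun x _ => by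
    simpa using (hasDerivAt_pow 2 x).hasDerivWithinAt
  have hsq_inj : InjOn (· ^ 2) (Ioi (0 : ℝ)) := fun x hx y hy h =>
    (pow_left_inj₀ (le_of_lt hx) (le_of_lt hy) two_ne_zero).1 h
  have hsq_image : (· ^ 2) '' Ioi (0 : ℝ) = Ioi 0 := by
    refine Subset.antisymm (by rintro _ ⟨x, hx : 0 < x, rfl⟩; exact pow_pos hx 2) fun y hy => ?_
    exact ⟨√y, sqrt_pos.2 hy, sq_sqrt (le_of_lt hy)⟩
  conv_lhs => rw [← hsq_image]
  rw [lintegral_image_eq_lintegral_abs_deriv_mul measurableSet_Ioi hsq_deriv hsq_inj]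
  exact setLIntegral_congr_fun measurableSet_Ioi fun x (hx : 0 < x) => by
    rw [abs_of_pos (by positivity)]

theorem gammaMeasure_Iic_zero (a r : ℝ) : gammaMeasure a r (Iic 0) = 0 := by
  rw [gammaMeasure, withDensity_apply _ measurableSet_Iic, ← setLIntegral_congr Iio_ae_eq_Iic,
    lintegral_gammaPDF_of_nonpos le_rfl]

theorem ae_pos_gammaMeasure (a r : ℝ) : ∀ᵐ y ∂gammaMeasure a r, 0 < y := by
  refine ae_iff.2 ?_
  simp only [not_lt]
  exact gammaMeasure_Iic_zero a r

theorem gammaMeasure_one_Ioi {r s : ℝ} (hr : 0 < r) (hs : 0 ≤ s) :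
    gammaMeasure 1 r (Ioi s) = ENNReal.ofReal (exp (-(r * s))) := by
  have := isProbabilityMeasure_expMeasure hr
  have := isProbabilityMeasure_gammaMeasure one_pos hr
  have hcdf := ofReal_cdf (expMeasure r) s
  rw [cdf_expMeasure_eq hr, if_pos hs, expMeasure] at hcdf
  have hexp_le : exp (-(r * s)) ≤ 1 := exp_le_one_iff.2 (neg_nonpos.2 (mul_nonneg hr.le hs))
  rw [← compl_Iic, prob_compl_eq_one_sub measurableSet_Iic, ← hcdf, ← ENNReal.ofReal_one,
    ← ENNReal.ofReal_sub _ (sub_nonneg.2 hexp_le), sub_sub_cancel]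

theorem lintegral_exp_neg_sq_div_gammaMeasure_half {t : ℝ} (ht : 0 ≤ t) :
    ∫⁻ y, ENNReal.ofReal (exp (-(t ^ 2 / (2 * y)))) ∂gammaMeasure (1 / 2) (1 / 2)
      = ENNReal.ofReal (exp (-t)) := by
  have hk : (1 / 2) ^ (1 / 2 : ℝ) / Gamma (1 / 2) * √(2 * π) = 1 := by
    rw [Gamma_one_half_eq, ← sqrt_eq_rpow, div_mul_eq_mul_div, ← sqrt_mul (by norm_num),
      show 1 / 2 * (2 * π) = π by ring, div_self (sqrt_ne_zero'.2 pi_pos)]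
  set k : ℝ := (1 / 2) ^ (1 / 2 : ℝ) / Gamma (1 / 2) with hk_def
  have hpoint : ∀ x ∈ Ioi (0 : ℝ), ENNReal.ofReal (2 * x) * (gammaPDF (1 / 2) (1 / 2) (x ^ 2) *
      ENNReal.ofReal (exp (-(t ^ 2 / (2 * x ^ 2)))))
      = ENNReal.ofReal k * (2 * ENNReal.ofReal (exp (-(x ^ 2 + t ^ 2 / x ^ 2) / 2))) := by
    intro x (hx : 0 < x)
    have hpow : (x ^ 2) ^ ((1 / 2 : ℝ) - 1) = x⁻¹ := by
      rw [show (1 / 2 : ℝ) - 1 = -(1 / 2) by norm_num, rpow_neg (by positivity), ← sqrt_eq_rpow,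
        sqrt_sq hx.le]
    have hexp : exp (-(1 / 2 * x ^ 2)) * exp (-(t ^ 2 / (2 * x ^ 2)))
        = exp (-(x ^ 2 + t ^ 2 / x ^ 2) / 2) := by
      rw [← exp_add]; congr 1; field_simp; ring
    rw [gammaPDF_of_nonneg (by positivity), hpow, ← ENNReal.ofReal_ofNat 2,
      ← ENNReal.ofReal_mul (by positivity), ← ENNReal.ofReal_mul (by positivity),
      ← ENNReal.ofReal_mul (by positivity), ← ENNReal.ofReal_mul (by positivity), ← hexp]
    congr 1
    rw [hk_def]
    field_simp
  have hpdf : Measurable (gammaPDF (1 / 2) (1 / 2)) := (measurable_gammaPDFReal _ _).ennreal_ofReal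
  rw [← Measure.restrict_eq_self_of_ae_mem (s := Ioi 0) (ae_pos_gammaMeasure _ _), gammaMeasure,
    restrict_withDensity measurableSet_Ioi,
    lintegral_withDensity_eq_lintegral_mul _ hpdf (by fun_prop),
    setLIntegral_Ioi_eq_setLIntegral_Ioi_comp_sq]
  simp only [Pi.mul_apply]
  rw [setLIntegral_congr_fun measurableSet_Ioi hpoint, lintegral_const_mul _ (by fun_prop),
    lintegral_const_mul _ (by fun_prop), two_mul_setLIntegral_Ioi_exp_neg_sq_add_sq_div_sq ht,
    ← ENNReal.ofReal_mul (by positivity), ← mul_assoc, hk, one_mul]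

theorem map_sqrt_mul_gammaMeasure_prod :
    ((gammaMeasure 1 (1 / 2)).prod (gammaMeasure (1 / 2) (1 / 2))).map
      (fun p : ℝ × ℝ => √(p.1 * p.2)) = gammaMeasure 1 1 := by
  have := isProbabilityMeasure_gammaMeasure one_pos (by norm_num : (0 : ℝ) < 1 / 2)
  have := isProbabilityMeasure_gammaMeasure (by norm_num : (0 : ℝ) < 1 / 2)
    (by norm_num : (0 : ℝ) < 1 / 2)
  have := isProbabilityMeasure_gammaMeasure one_pos one_pos
  have hf : Measurable fun p : ℝ × ℝ => √(p.1 * p.2) := by fun_prop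
  have := Measure.isProbabilityMeasure_map (μ := (gammaMeasure 1 (1 / 2)).prod
    (gammaMeasure (1 / 2) (1 / 2))) hf.aemeasurable
  refine Measure.ext_of_Iic _ _ fun t => ?_
  rcases lt_or_ge t 0 with ht | ht
  · have hempty : (fun p : ℝ × ℝ => √(p.1 * p.2)) ⁻¹' Iic t = ∅ :=
      eq_empty_of_forall_notMem fun p hp => (sqrt_nonneg _).not_gt (lt_of_le_of_lt hp ht)
    rw [Measure.map_apply hf measurableSet_Iic, hempty, measure_empty,
      measure_mono_null (Iic_subset_Iic.2 ht.le) (gammaMeasure_Iic_zero 1 1)]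
  have hsection : ∀ y, 0 < y →
      (fun x => (x, y)) ⁻¹' ((fun p : ℝ × ℝ => √(p.1 * p.2)) ⁻¹' Ioi t) = Ioi (t ^ 2 / y) := by
    intro y hy
    ext x
    simp only [mem_preimage, mem_Ioi]
    rw [lt_sqrt ht, div_lt_iff₀ hy]
  rw [← compl_Ioi, prob_compl_eq_one_sub measurableSet_Ioi, prob_compl_eq_one_sub measurableSet_Ioi,
    gammaMeasure_one_Ioi one_pos ht, one_mul, Measure.map_apply hf measurableSet_Ioi,
    Measure.prod_apply_symm (hf measurableSet_Ioi),
    ← lintegral_exp_neg_sq_div_gammaMeasure_half ht]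
  congr 1
  refine lintegral_congr_ae <| (ae_pos_gammaMeasure _ _).mono fun y hy => ?_
  simp only
  rw [hsection y hy, gammaMeasure_one_Ioi (by norm_num) (by positivity)]
  congr 3
  field_simp

/-- If `E ~ Exp(1/2) = Gamma(1, 1/2)` and `G ~ Gamma(1/2, 1/2)` are independent, then
`√(E·G)` has the exponential distribution with rate 1, i.e. `Gamma(1, 1)`. -/
theorem stmt3 {Ω : Type*} [MeasurableSpace Ω] (P : Measure Ω) [IsProbabilityMeasure P]
    (E G : Ω → ℝ) (hEmeas : Measurable E) (hGmeas : Measurable G)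
    (hElaw : Measure.map E P = gammaMeasure 1 (1 / 2))
    (hGlaw : Measure.map G P = gammaMeasure (1 / 2) (1 / 2))
    (hEG : IndepFun E G P) :
    Measure.map (fun ω => Real.sqrt (E ω * G ω)) P = gammaMeasure 1 1 := by
  have hpair : P.map (fun ω => (E ω, G ω))
      = (gammaMeasure 1 (1 / 2)).prod (gammaMeasure (1 / 2) (1 / 2)) := by
    rw [← hElaw, ← hGlaw]
    exact (indepFun_iff_map_prod_eq_prod_map_map hEmeas.aemeasurable hGmeas.aemeasurable).1 hEG
  rw [← map_sqrt_mul_gammaMeasure_prod, ← hpair,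
    Measure.map_map (by fun_prop) (hEmeas.prodMk hGmeas)]
  rfl
end

section
/- Let α_1, …, α_n > 0 and let G_1, …, G_n be independent random variables with G_j ~ Gamma(α_j, 1); write G = G_1 + ⋯ + G_n and, for a fixed index i, write G^(i) = G − G_i. Let γ ~ Gamma(α_i + 1, 1) be independent of (G_j)_{j ≠ i}. Then for every non-negative measurable function Φ on the simplex, E[ G_i · Φ(G_1/G, …, G_n/G) ] = α_i · E[ Φ( G_1/(γ+G^(i)), …, G_{i-1}/(γ+G^(i)), γ/(γ+G^(i)), G_{i+1}/(γ+G^(i)), …, G_n/(γ+G^(i)) ) ]. -/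
/-!
Split `(G_j)` into `G_i` and the independent block `(G_j)_{j ≠ i}`. Both sides are then integrals
of one function of `(G_i, (G_j)_{j ≠ i})`, resp. `(γ, (G_j)_{j ≠ i})`, against a product measure,
and the weight `G_i` turns the `Gamma(α_i, 1)` factor into `α_i · Gamma(α_i + 1, 1)`, because
`x · x^(a-1) / Γ(a) = a · x^a / Γ(a + 1)`.
-/

open MeasureTheory ProbabilityTheory

theorem ofReal_mul_gammaPDF {a r : ℝ} (ha : 0 < a) (hr : 0 < r) (x : ℝ) :
    ENNReal.ofReal x * gammaPDF a r x = ENNReal.ofReal (a / r) * gammaPDF (a + 1) r x := by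
  rcases lt_or_ge x 0 with hx | hx
  · simp [gammaPDF_of_neg hx]
  have hxa : x * x ^ (a - 1) = x ^ a := by
    rw [← Real.rpow_one_add' hx (by linarith), add_sub_cancel]
  rw [gammaPDF_of_nonneg hx, gammaPDF_of_nonneg hx, ← ENNReal.ofReal_mul hx,
    ← ENNReal.ofReal_mul (by positivity), Real.Gamma_add_one ha.ne', add_sub_cancel_right,
    Real.rpow_add_one hr.ne', ← hxa]
  have := Real.Gamma_pos_of_pos ha
  congr 1
  field_simp

theorem lintegral_ofReal_mul_gammaMeasure {a r : ℝ} (ha : 0 < a) (hr : 0 < r) {g : ℝ → ENNReal}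
    (hg : Measurable g) :
    ∫⁻ x, ENNReal.ofReal x * g x ∂gammaMeasure a r
      = ENNReal.ofReal (a / r) * ∫⁻ x, g x ∂gammaMeasure (a + 1) r := by
  have hpdf (b : ℝ) : Measurable (gammaPDF b r) := (measurable_gammaPDFReal b r).ennreal_ofReal
  rw [gammaMeasure, gammaMeasure,
    lintegral_withDensity_eq_lintegral_mul _ (hpdf a) (by fun_prop),
    lintegral_withDensity_eq_lintegral_mul _ (hpdf _) hg, ← lintegral_const_mul _ (by fun_prop)]
  refine lintegral_congr fun x => ?_
  simp only [Pi.mul_apply]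
  rw [mul_left_comm, ← mul_assoc, ofReal_mul_gammaPDF ha hr, mul_assoc]

theorem lintegral_ofReal_fst_mul_gammaMeasure_prod {E : Type*} [MeasurableSpace E]
    (ν : Measure E) [SFinite ν] {a r : ℝ} (ha : 0 < a) (hr : 0 < r) {K : ℝ × E → ENNReal}
    (hK : Measurable K) :
    ∫⁻ p, ENNReal.ofReal p.1 * K p ∂(gammaMeasure a r).prod ν
      = ENNReal.ofReal (a / r) * ∫⁻ p, K p ∂(gammaMeasure (a + 1) r).prod ν := by
  rw [lintegral_prod _ (by fun_prop),
    lintegral_prod _ hK.aemeasurable,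
    ← lintegral_ofReal_mul_gammaMeasure ha hr hK.lintegral_prod_right']
  exact lintegral_congr fun x => lintegral_const_mul (ENNReal.ofReal x) (by fun_prop)

theorem lintegral_ofReal_mul_eq_of_indepFun {Ω E : Type*} [MeasurableSpace Ω] [MeasurableSpace E]
    {P : Measure Ω} [IsFiniteMeasure P] {X Y : Ω → ℝ} {Z : Ω → E}
    (hX : Measurable X) (hY : Measurable Y) (hZ : Measurable Z)
    (hXZ : IndepFun X Z P) (hYZ : IndepFun Y Z P) {a r : ℝ} (ha : 0 < a) (hr : 0 < r)
    (hXlaw : P.map X = gammaMeasure a r) (hYlaw : P.map Y = gammaMeasure (a + 1) r)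
    {K : ℝ × E → ENNReal} (hK : Measurable K) :
    ∫⁻ ω, ENNReal.ofReal (X ω) * K (X ω, Z ω) ∂P
      = ENNReal.ofReal (a / r) * ∫⁻ ω, K (Y ω, Z ω) ∂P := by
  rw [← lintegral_map (f := fun p => ENNReal.ofReal p.1 * K p) (by fun_prop) (hX.prodMk hZ),
    ← lintegral_map hK (hY.prodMk hZ),
    (indepFun_iff_map_prod_eq_prod_map_map hX.aemeasurable hZ.aemeasurable).1 hXZ,
    (indepFun_iff_map_prod_eq_prod_map_map hY.aemeasurable hZ.aemeasurable).1 hYZ, hXlaw, hYlaw]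
  exact lintegral_ofReal_fst_mul_gammaMeasure_prod _ ha hr hK

theorem ProbabilityTheory.iIndepFun.indepFun_apply_others {Ω ι β : Type*} [MeasurableSpace Ω]
    [MeasurableSpace β] [Fintype ι] [DecidableEq ι] {P : Measure Ω} {f : ι → Ω → β}
    (hf : iIndepFun f P) (hfm : ∀ j, Measurable (f j)) (i : ι) :
    IndepFun (f i) (fun ω (j : {j // j ≠ i}) => f j ω) P := by
  have h := hf.indepFun_finset {i} (Finset.univ.erase i)
    (Finset.disjoint_singleton_left.2 (Finset.notMem_erase i _)) hfm
  exact h.comp (measurable_pi_apply ⟨i, Finset.mem_singleton_self i⟩)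
    (measurable_pi_lambda (fun x (j : {j // j ≠ i}) => x ⟨j, by simpa using j.2⟩)
      fun j => measurable_pi_apply _)

theorem measurable_funSplitAt_symm {ι β : Type*} [DecidableEq ι] [MeasurableSpace β] (i : ι) :
    Measurable (Equiv.funSplitAt i β).symm := by
  refine measurable_pi_lambda _ fun j => ?_
  by_cases h : j = i
  · subst h; simpa [Equiv.funSplitAt_symm_apply] using measurable_fst
  · simp only [Equiv.funSplitAt_symm_apply, dif_neg h]
    fun_prop

theorem Equiv.funSplitAt_symm_eq_update {ι β : Type*} [DecidableEq ι] (i : ι) (x : β)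
    (y : ι → β) : (Equiv.funSplitAt i β).symm (x, fun j => y j) = Function.update y i x := by
  funext j
  by_cases h : j = i
  · subst h; simp [Equiv.funSplitAt_symm_apply]
  · simp [Equiv.funSplitAt_symm_apply, h]

/-- Let `G_1, …, G_n` be independent with `G_j ~ Gamma(α_j, 1)`, write `G = G_1 + ⋯ + G_n`
and `G^(i) = G - G_i`, and let `γ ~ Gamma(α_i + 1, 1)` be independent of `(G_j)_{j ≠ i}`.
Then for every non-negative measurable `Φ`,
`E[G_i · Φ(G_1/G, …, G_n/G)]
  = α_i · E[Φ(G_1/(γ+G^(i)), …, γ/(γ+G^(i)), …, G_n/(γ+G^(i)))]`,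
where on the right-hand side `γ` replaces the `i`-th coordinate. -/
theorem stmt7 {Ω : Type*} [MeasurableSpace Ω] (P : Measure Ω) [IsProbabilityMeasure P]
    (n : ℕ) (α : Fin n → ℝ) (hα : ∀ j, 0 < α j) (i : Fin n)
    (G : Fin n → Ω → ℝ) (γ : Ω → ℝ)
    (hGmeas : ∀ j, Measurable (G j)) (hγmeas : Measurable γ)
    (hGlaw : ∀ j, Measure.map (G j) P = gammaMeasure (α j) 1)
    (hGindep : iIndepFun G P)
    (hγlaw : Measure.map γ P = gammaMeasure (α i + 1) 1)
    (hγindep : IndepFun γ (fun ω (j : {j : Fin n // j ≠ i}) => G j.1 ω) P)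
    (Φ : (Fin n → ℝ) → ENNReal) (hΦ : Measurable Φ) :
    ∫⁻ ω, ENNReal.ofReal (G i ω) * Φ (fun j => G j ω / ∑ k, G k ω) ∂P
      = ENNReal.ofReal (α i) *
        ∫⁻ ω, Φ (fun j =>
          (if j = i then γ ω else G j ω) / (γ ω + ∑ k ∈ Finset.univ.erase i, G k ω)) ∂P := by
  let K (p : ℝ × ({j : Fin n // j ≠ i} → ℝ)) : ENNReal :=
    Φ fun j => (Equiv.funSplitAt i ℝ).symm p j / ∑ k, (Equiv.funSplitAt i ℝ).symm p k
  have hK : Measurable K := by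
    have := measurable_funSplitAt_symm (β := ℝ) i
    fun_prop
  have key := lintegral_ofReal_mul_eq_of_indepFun (hGmeas i) hγmeas
    (measurable_pi_lambda _ fun j : {j // j ≠ i} => hGmeas j)
    (hGindep.indepFun_apply_others hGmeas i) hγindep (hα i) one_pos (hGlaw i) hγlaw hK
  rw [div_one] at key
  have hsplit (x : ℝ) (ω : Ω) : (Equiv.funSplitAt i ℝ).symm (x, fun j => G j ω)
      = Function.update (fun j => G j ω) i x :=
    Equiv.funSplitAt_symm_eq_update i x fun j => G j ω
  convert key using 3 with ω
  · simp only [K, hsplit, Function.update_eq_self]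
  · funext ω
    simp only [K, hsplit]
    rw [Finset.sum_update_of_mem (Finset.mem_univ i), Finset.sdiff_singleton_eq_erase]
    simp only [Function.update_apply]
end

section
/- Let m ≥ 1 and n ≥ 1 be integers. Suppose (C, A) is a random vector taking values in (0,∞)² whose joint density with respect to Lebesgue measure is proportional to c^{m+2(n−1)} (a + c) exp(−(a+c)²/2). Then V = C/(C+A) and W = C + A are independent random variables; V has density (m+2n−1)·v^{m+2n−2} on (0,1) (equivalently, (V, 1−V) ~ Dirichlet(m+2n−1, 1)); W has density proportional to w^{m+2n} e^{−w²/2} on (0,∞); and W² ~ Gamma((m+2n+1)/2, 1/2). -/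
/-!
Under `(c, a) ↦ (v, w) = (c / (c + a), c + a)`, whose inverse `(v, w) ↦ (v w, (1 - v) w)` has
Jacobian `w`, the density `c^k (a + c) e^{-(a+c)²/2}` becomes `v^k · w^{k+2} e^{-w²/2}` on
`(0,1) × (0,∞)`. It factorises, so the law of `(V, W)` is a product measure: `V` and `W` are
independent with these marginal densities, and the first factor normalises to `(k+1) v^k`.
Pushing the law of `W` forward by `w ↦ w²` gives a density proportional to
`y^{(k+1)/2} e^{-y/2}`, that of `Gamma((k+3)/2, 1/2)`; both are probability measures, so the
constant is `1`.
-/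

open MeasureTheory ProbabilityTheory Set Real
open scoped ENNReal

section ChangeOfVariables

variable {E : Type*} [NormedAddCommGroup E] [NormedSpace ℝ E] [FiniteDimensional ℝ E]
  [MeasurableSpace E] [BorelSpace E] (μ : Measure E) [μ.IsAddHaarMeasure]

theorem map_withDensity_eq_withDensity_of_invOn {T S : E → E} {S' : E → E →L[ℝ] E}
    {Q R : Set E} {f : E → ℝ≥0∞} (hT : Measurable T) (hQ : MeasurableSet Q)
    (hR : MeasurableSet R) (hf : f.support ⊆ Q)
    (hS' : ∀ p ∈ R, HasFDerivWithinAt S (S' p) R p)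
    (hinv : InvOn T S R Q) (hSR : MapsTo S R Q) (hTQ : MapsTo T Q R) :
    (μ.withDensity f).map T
      = μ.withDensity (R.indicator fun p => ENNReal.ofReal |(S' p).det| * f (S p)) := by
  have hbij : BijOn S R Q := hinv.bijOn hSR hTQ
  ext s hs
  rw [Measure.map_apply hT hs, withDensity_apply _ (hT hs), withDensity_apply _ hs,
    ← setLIntegral_eq_of_support_subset (μ := μ.restrict (T ⁻¹' s)) hf,
    ← setLIntegral_eq_of_support_subset (μ := μ.restrict s) support_indicator_subset,
    Measure.restrict_restrict hQ, Measure.restrict_restrict hR, inter_comm Q,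
    ← hbij.image_eq, ← hinv.1.image_inter', inter_comm s,
    lintegral_image_eq_lintegral_abs_det_fderiv_mul μ (hR.inter hs)
      (fun p hp => (hS' p hp.1).mono inter_subset_left) (hbij.injOn.mono inter_subset_left)]
  exact setLIntegral_congr_fun (hR.inter hs) fun p hp =>
    (indicator_of_mem hp.1 (fun p => ENNReal.ofReal |(S' p).det| * f (S p))).symm

end ChangeOfVariables

noncomputable def ratioSum (q : ℝ × ℝ) : ℝ × ℝ := (q.1 / (q.1 + q.2), q.1 + q.2)

def ratioSumInv (p : ℝ × ℝ) : ℝ × ℝ := (p.1 * p.2, (1 - p.1) * p.2)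

noncomputable def ratioSumInvDeriv (p : ℝ × ℝ) : ℝ × ℝ →L[ℝ] ℝ × ℝ :=
  LinearMap.toContinuousLinearMap (Matrix.toLin (Module.Basis.finTwoProd ℝ)
    (Module.Basis.finTwoProd ℝ) !![p.2, p.1; -p.2, 1 - p.1])

lemma measurable_ratioSum : Measurable ratioSum := by
  unfold ratioSum; fun_prop

lemma hasFDerivAt_ratioSumInv (p : ℝ × ℝ) :
    HasFDerivAt ratioSumInv (ratioSumInvDeriv p) p := by
  rw [ratioSumInvDeriv, Matrix.toLin_finTwoProd_toContinuousLinearMap]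
  have hfst : HasFDerivAt (𝕜 := ℝ) Prod.fst _ p := hasFDerivAt_fst
  have hsnd : HasFDerivAt (𝕜 := ℝ) Prod.snd _ p := hasFDerivAt_snd
  exact ((hfst.mul hsnd).prodMk (((hasFDerivAt_const (1 : ℝ) p).sub hfst).mul hsnd)).congr_fderiv
    (by ext <;> simp)

lemma det_ratioSumInvDeriv (p : ℝ × ℝ) : (ratioSumInvDeriv p).det = p.2 := by
  simp only [ratioSumInvDeriv, LinearMap.det_toContinuousLinearMap, LinearMap.det_toLin,
    Matrix.det_fin_two_of]
  ring

lemma invOn_ratioSum : InvOn ratioSum ratioSumInv (Ioo 0 1 ×ˢ Ioi 0) (Ioi 0 ×ˢ Ioi 0) := by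
  constructor
  · rintro ⟨v, w⟩ ⟨-, hw : 0 < w⟩
    simp only [ratioSumInv, ratioSum]
    rw [← add_mul, add_sub_cancel, one_mul, mul_div_cancel_right₀ _ hw.ne']
  · rintro ⟨c, a⟩ ⟨hc : 0 < c, ha : 0 < a⟩
    simp only [ratioSumInv, ratioSum, Prod.mk.injEq]
    constructor
    · field_simp
    · field_simp
      ring

lemma mapsTo_ratioSum : MapsTo ratioSum (Ioi 0 ×ˢ Ioi 0) (Ioo 0 1 ×ˢ Ioi 0) := by
  rintro ⟨c, a⟩ ⟨hc : 0 < c, ha : 0 < a⟩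
  have hca : 0 < c + a := by positivity
  exact ⟨⟨div_pos hc hca, (div_lt_one hca).2 (by linarith)⟩, hca⟩

lemma mapsTo_ratioSumInv : MapsTo ratioSumInv (Ioo 0 1 ×ˢ Ioi 0) (Ioi 0 ×ˢ Ioi 0) := by
  rintro ⟨v, w⟩ ⟨⟨hv0 : 0 < v, hv1 : v < 1⟩, hw : 0 < w⟩
  exact ⟨mul_pos hv0 hw, mul_pos (by linarith) hw⟩

theorem map_ratioSum_withDensity {f : ℝ × ℝ → ℝ≥0∞} (hf : f.support ⊆ Ioi 0 ×ˢ Ioi 0) :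
    (volume.withDensity f).map ratioSum = volume.withDensity
      ((Ioo 0 1 ×ˢ Ioi 0).indicator fun p => ENNReal.ofReal p.2 * f (ratioSumInv p)) := by
  rw [map_withDensity_eq_withDensity_of_invOn volume measurable_ratioSum
    (measurableSet_Ioi.prod measurableSet_Ioi) (measurableSet_Ioo.prod measurableSet_Ioi) hf
    (fun p _ => (hasFDerivAt_ratioSumInv p).hasFDerivWithinAt) invOn_ratioSum mapsTo_ratioSumInv
    mapsTo_ratioSum]
  refine congrArg _ (indicator_congr fun p (hp : p ∈ Ioo 0 1 ×ˢ Ioi 0) => ?_)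
  rw [det_ratioSumInvDeriv, abs_of_pos hp.2]

noncomputable def jointDensity (κ : ℝ) (k : ℕ) (q : ℝ × ℝ) : ℝ :=
  if 0 < q.1 ∧ 0 < q.2 then κ * q.1 ^ k * (q.2 + q.1) * exp (-(q.2 + q.1) ^ 2 / 2) else 0

noncomputable def powDensity (k : ℕ) (v : ℝ) : ℝ :=
  if 0 < v ∧ v < 1 then (k + 1) * v ^ k else 0

noncomputable def chiDensity (c : ℝ) (j : ℕ) (w : ℝ) : ℝ :=
  if 0 < w then c * w ^ j * exp (-w ^ 2 / 2) else 0

lemma measurable_powDensity (k : ℕ) : Measurable (powDensity k) :=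
  Measurable.ite (measurableSet_lt measurable_const measurable_id |>.inter
    (measurableSet_lt measurable_id measurable_const)) (by fun_prop) measurable_const

lemma measurable_chiDensity (c : ℝ) (j : ℕ) : Measurable (chiDensity c j) :=
  Measurable.ite measurableSet_Ioi (by fun_prop) measurable_const

lemma powDensity_nonneg (k : ℕ) (v : ℝ) : 0 ≤ powDensity k v := by
  unfold powDensity
  split_ifs with h
  · exact mul_nonneg (by positivity) (pow_nonneg h.1.le k)
  · exact le_rfl

lemma powDensity_eq_indicator (k : ℕ) :
    powDensity k = (Ioo (0 : ℝ) 1).indicator fun v => ((k : ℝ) + 1) * v ^ k := by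
  ext v
  simp only [powDensity, indicator, mem_Ioo]

lemma isProbabilityMeasure_withDensity_powDensity (k : ℕ) :
    IsProbabilityMeasure (volume.withDensity fun v => ENNReal.ofReal (powDensity k v)) := by
  constructor
  have hint : IntegrableOn (fun v : ℝ => (k + 1) * v ^ k) (Ioo 0 1) :=
    (Continuous.integrableOn_Icc (by fun_prop)).mono_set Ioo_subset_Icc_self
  rw [withDensity_apply _ MeasurableSet.univ, Measure.restrict_univ,
    ← ofReal_integral_eq_lintegral_ofReal _ (ae_of_all _ (powDensity_nonneg k)),
    powDensity_eq_indicator, integral_indicator measurableSet_Ioo,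
    ← integral_Ioc_eq_integral_Ioo, ← intervalIntegral.integral_of_le zero_le_one,
    intervalIntegral.integral_const_mul, integral_pow]
  · field_simp
    simp
  · rw [powDensity_eq_indicator]
    exact hint.integrable_indicator measurableSet_Ioo

lemma ratioSumInv_snd_mul_jointDensity (κ : ℝ) (k : ℕ) {p : ℝ × ℝ}
    (hp : p ∈ Ioo 0 1 ×ˢ Ioi 0) :
    p.2 * jointDensity κ k (ratioSumInv p)
      = powDensity k p.1 * chiDensity (κ / (k + 1)) (k + 2) p.2 := by
  obtain ⟨⟨hv0, hv1⟩, hw : 0 < p.2⟩ := hp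
  have hpos : 0 < (ratioSumInv p).1 ∧ 0 < (ratioSumInv p).2 :=
    mapsTo_ratioSumInv ⟨⟨hv0, hv1⟩, hw⟩
  rw [jointDensity, if_pos hpos, powDensity, if_pos ⟨hv0, hv1⟩, chiDensity, if_pos hw]
  simp only [ratioSumInv]
  rw [show (1 - p.1) * p.2 + p.1 * p.2 = p.2 by ring]
  field_simp
  ring

theorem map_ratioSum_withDensity_jointDensity (κ : ℝ) (k : ℕ) :
    (volume.withDensity fun q => ENNReal.ofReal (jointDensity κ k q)).map ratioSum
      = (volume.withDensity fun v => ENNReal.ofReal (powDensity k v)).prod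
          (volume.withDensity fun w => ENNReal.ofReal (chiDensity (κ / (k + 1)) (k + 2) w)) := by
  have hsupp : (fun q => ENNReal.ofReal (jointDensity κ k q)).support ⊆ Ioi 0 ×ˢ Ioi 0 := by
    intro q hq
    by_contra h
    exact hq (by simp [jointDensity, if_neg (show ¬(0 < q.1 ∧ 0 < q.2) from h)])
  rw [map_ratioSum_withDensity hsupp, prod_withDensity (measurable_powDensity k).ennreal_ofReal
    (measurable_chiDensity _ _).ennreal_ofReal, ← Measure.volume_eq_prod]
  congr 1
  funext p
  by_cases hp : p ∈ Ioo 0 1 ×ˢ Ioi 0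
  · rw [indicator_of_mem hp, ← ENNReal.ofReal_mul hp.2.le,
      ← ENNReal.ofReal_mul (powDensity_nonneg k p.1), ratioSumInv_snd_mul_jointDensity κ k hp]
  · rw [indicator_of_notMem hp]
    simp only [mem_prod, mem_Ioo, mem_Ioi] at hp
    by_cases hv : 0 < p.1 ∧ p.1 < 1
    · simp [chiDensity, if_neg (fun hw => hp ⟨hv, hw⟩)]
    · simp [powDensity, if_neg hv]

section Marginals

variable {Ω α β : Type*} [MeasurableSpace Ω] [MeasurableSpace α] [MeasurableSpace β]
  {P : Measure Ω} {X : Ω → α} {Y : Ω → β}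
  {μ : Measure α} {ν : Measure β} [IsProbabilityMeasure μ] [SFinite ν]

lemma map_snd_eq_of_map_eq_prod (hX : Measurable X) (hY : Measurable Y)
    (h : P.map (fun ω => (X ω, Y ω)) = μ.prod ν) : P.map Y = ν := by
  rw [← (measurePreserving_snd (μ := μ) (ν := ν)).map_eq, ← h,
    Measure.map_map measurable_snd (hX.prodMk hY)]
  rfl

lemma map_fst_eq_of_map_eq_prod [IsProbabilityMeasure P] (hX : Measurable X) (hY : Measurable Y)
    (h : P.map (fun ω => (X ω, Y ω)) = μ.prod ν) : P.map X = μ := by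
  have : IsProbabilityMeasure ν :=
    map_snd_eq_of_map_eq_prod hX hY h ▸ Measure.isProbabilityMeasure_map hY.aemeasurable
  rw [← (measurePreserving_fst (μ := μ) (ν := ν)).map_eq, ← h,
    Measure.map_map measurable_fst (hX.prodMk hY)]
  rfl

lemma indepFun_of_map_eq_prod [IsProbabilityMeasure P] (hX : Measurable X) (hY : Measurable Y)
    (h : P.map (fun ω => (X ω, Y ω)) = μ.prod ν) : IndepFun X Y P := by
  rw [indepFun_iff_map_prod_eq_prod_map_map hX.aemeasurable hY.aemeasurable, h,
    map_fst_eq_of_map_eq_prod hX hY h, map_snd_eq_of_map_eq_prod hX hY h]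

end Marginals

lemma MeasureTheory.Measure.eq_of_eq_smul {α : Type*} [MeasurableSpace α] {μ ν : Measure α}
    [IsProbabilityMeasure μ] [IsProbabilityMeasure ν] {t : ℝ≥0∞} (h : μ = t • ν) : μ = ν := by
  have ht : t = 1 := by simpa using (congrArg (· univ) h).symm
  rw [h, ht, one_smul]

theorem map_sq_withDensity {h : ℝ → ℝ≥0∞} (hh : h.support ⊆ Ioi 0) :
    (volume.withDensity h).map (· ^ 2) = volume.withDensity
      ((Ioi 0).indicator fun y => ENNReal.ofReal (1 / (2 * √y)) * h √y) := by
  have hinv : InvOn (· ^ 2) Real.sqrt (Ioi 0) (Ioi 0) :=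
    ⟨fun y hy => sq_sqrt (le_of_lt hy), fun w hw => sqrt_sq (le_of_lt hw)⟩
  rw [map_withDensity_eq_withDensity_of_invOn volume (by fun_prop) measurableSet_Ioi
    measurableSet_Ioi hh (S' := fun y => .toSpanSingleton ℝ (1 / (2 * √y)))
    (fun y hy => (hasDerivAt_sqrt (ne_of_gt hy)).hasDerivWithinAt.hasFDerivWithinAt) hinv
    (fun y hy => sqrt_pos.2 hy) (fun w (hw : 0 < w) => pow_pos hw 2)]
  refine congrArg _ (indicator_congr fun y (hy : 0 < y) => ?_)
  rw [ContinuousLinearMap.det_toSpanSingleton, abs_of_pos (by positivity)]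

lemma inv_two_sqrt_mul_chiDensity_sqrt (c : ℝ) (j : ℕ) {y : ℝ} (hy : 0 < y) :
    1 / (2 * √y) * chiDensity c j √y
      = c / 2 * Gamma ((j + 1) / 2) / (1 / 2) ^ (((j : ℝ) + 1) / 2) *
        gammaPDFReal ((j + 1) / 2) (1 / 2) y := by
  have hsy : 0 < √y := sqrt_pos.2 hy
  have hpow : √y ^ j = √y * y ^ (((j : ℝ) + 1) / 2 - 1) := by
    rw [sqrt_eq_rpow, ← rpow_natCast, ← rpow_mul hy.le, ← rpow_add hy]
    ring_nf
  rw [chiDensity, if_pos hsy, gammaPDFReal, if_pos hy.le, sq_sqrt hy.le, hpow,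
    show -(1 / 2 * y) = -y / 2 by ring]
  have := (Gamma_pos_of_pos (by positivity : (0 : ℝ) < ((j : ℝ) + 1) / 2)).ne'
  field_simp

theorem map_sq_withDensity_chiDensity {c : ℝ} (hc : 0 ≤ c) (j : ℕ)
    [IsProbabilityMeasure (volume.withDensity fun w => ENNReal.ofReal (chiDensity c j w))] :
    (volume.withDensity fun w => ENNReal.ofReal (chiDensity c j w)).map (· ^ 2)
      = gammaMeasure ((j + 1) / 2) (1 / 2) := by
  have : IsProbabilityMeasure ((volume.withDensity fun w => ENNReal.ofReal
      (chiDensity c j w)).map (· ^ 2)) := Measure.isProbabilityMeasure_map (by fun_prop)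
  have := isProbabilityMeasure_gammaMeasure (a := ((j : ℝ) + 1) / 2) (by positivity)
    (by norm_num : (0 : ℝ) < 1 / 2)
  have hsupp : (fun w => ENNReal.ofReal (chiDensity c j w)).support ⊆ Ioi 0 := by
    intro w hw
    by_contra h
    exact hw (by simp [chiDensity, if_neg (show ¬0 < w from h)])
  refine Measure.eq_of_eq_smul (t := ENNReal.ofReal (c / 2 * Gamma ((j + 1) / 2) /
    (1 / 2) ^ (((j : ℝ) + 1) / 2))) ?_
  rw [map_sq_withDensity hsupp, gammaMeasure, ← withDensity_smul _
    (f := gammaPDF _ _) (measurable_gammaPDFReal _ _).ennreal_ofReal]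
  refine withDensity_congr_ae ?_
  filter_upwards [Measure.ae_ne volume 0] with y hy0
  rcases hy0.lt_or_gt with hy | hy
  · rw [indicator_of_notMem (notMem_Ioi.2 hy.le), Pi.smul_apply, gammaPDF_of_neg hy, smul_zero]
  · rw [indicator_of_mem (mem_Ioi.2 hy), Pi.smul_apply, smul_eq_mul, gammaPDF,
      ← ENNReal.ofReal_mul (by positivity), ← ENNReal.ofReal_mul (by positivity),
      inv_two_sqrt_mul_chiDensity_sqrt c j hy]

theorem stmt8_general {Ω : Type*} [MeasurableSpace Ω] (P : Measure Ω) [IsProbabilityMeasure P]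
    (m n : ℕ) (hn : 1 ≤ n)
    (C A : Ω → ℝ) (hCmeas : Measurable C) (hAmeas : Measurable A)
    (hdens : ∃ κ : ℝ, 0 < κ ∧
      Measure.map (fun ω => (C ω, A ω)) P
        = (volume : Measure (ℝ × ℝ)).withDensity fun p =>
            ENNReal.ofReal (if 0 < p.1 ∧ 0 < p.2
              then κ * p.1 ^ (m + 2 * (n - 1)) * (p.2 + p.1) *
                Real.exp (-(p.2 + p.1) ^ 2 / 2)
              else 0)) :
    IndepFun (fun ω => C ω / (C ω + A ω)) (fun ω => C ω + A ω) P ∧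
    Measure.map (fun ω => C ω / (C ω + A ω)) P
      = volume.withDensity (fun v => ENNReal.ofReal
          (if 0 < v ∧ v < 1 then ((m : ℝ) + 2 * n - 1) * v ^ (m + 2 * n - 2) else 0)) ∧
    (∃ c : ℝ, 0 < c ∧
      Measure.map (fun ω => C ω + A ω) P
        = volume.withDensity (fun w => ENNReal.ofReal
            (if 0 < w then c * w ^ (m + 2 * n) * Real.exp (-w ^ 2 / 2) else 0))) ∧
    Measure.map (fun ω => (C ω + A ω) ^ 2) P
      = gammaMeasure (((m : ℝ) + 2 * n + 1) / 2) (1 / 2) := by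
  obtain ⟨κ, hκ, hCA⟩ := hdens
  set k := m + 2 * (n - 1)
  have hk : m + 2 * n - 2 = k := by omega
  have hk2 : m + 2 * n = k + 2 := by omega
  have hkR : (m : ℝ) + 2 * n - 1 = k + 1 := by
    push_cast [k, Nat.cast_sub hn]
    ring
  have hV : Measurable fun ω => C ω / (C ω + A ω) := by fun_prop
  have hW : Measurable fun ω => C ω + A ω := by fun_prop
  have hjoint : P.map (fun ω => (C ω / (C ω + A ω), C ω + A ω))
      = (volume.withDensity fun v => ENNReal.ofReal (powDensity k v)).prod
          (volume.withDensity fun w => ENNReal.ofReal (chiDensity (κ / (k + 1)) (k + 2) w)) := by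
    rw [show (fun ω => (C ω / (C ω + A ω), C ω + A ω)) = ratioSum ∘ fun ω => (C ω, A ω) from rfl,
      ← Measure.map_map measurable_ratioSum (hCmeas.prodMk hAmeas), hCA]
    exact map_ratioSum_withDensity_jointDensity κ k
  have := isProbabilityMeasure_withDensity_powDensity k
  have hlawW := map_snd_eq_of_map_eq_prod hV hW hjoint
  have : IsProbabilityMeasure (volume.withDensity fun w =>
      ENNReal.ofReal (chiDensity (κ / (k + 1)) (k + 2) w)) :=
    hlawW ▸ Measure.isProbabilityMeasure_map hW.aemeasurable
  refine ⟨indepFun_of_map_eq_prod hV hW hjoint, ?_, ⟨κ / (k + 1), by positivity, ?_⟩, ?_⟩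
  · rw [map_fst_eq_of_map_eq_prod hV hW hjoint, hk, hkR]
    rfl
  · rw [hlawW, hk2]
    rfl
  · rw [show (fun ω => (C ω + A ω) ^ 2) = (· ^ 2) ∘ fun ω => C ω + A ω from rfl,
      ← Measure.map_map (by fun_prop) hW, hlawW,
      map_sq_withDensity_chiDensity (by positivity)]
    congr 2
    push_cast
    linarith

/-- Let `m, n ≥ 1` and let `(C, A)` be a random vector in `(0,∞)²` with joint density
proportional to `c^(m+2(n-1)) (a+c) exp(-(a+c)²/2)`.  Then `V = C/(C+A)` and `W = C+A`
are independent, `V` has density `(m+2n-1)·v^(m+2n-2)` on `(0,1)`, `W` has density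
proportional to `w^(m+2n) e^(-w²/2)` on `(0,∞)`, and `W² ~ Gamma((m+2n+1)/2, 1/2)`. -/
theorem stmt8 {Ω : Type*} [MeasurableSpace Ω] (P : Measure Ω) [IsProbabilityMeasure P]
    (m n : ℕ) (hm : 1 ≤ m) (hn : 1 ≤ n)
    (C A : Ω → ℝ) (hCmeas : Measurable C) (hAmeas : Measurable A)
    (hdens : ∃ κ : ℝ, 0 < κ ∧
      Measure.map (fun ω => (C ω, A ω)) P
        = (volume : Measure (ℝ × ℝ)).withDensity fun p =>
            ENNReal.ofReal (if 0 < p.1 ∧ 0 < p.2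
              then κ * p.1 ^ (m + 2 * (n - 1)) * (p.2 + p.1) *
                Real.exp (-(p.2 + p.1) ^ 2 / 2)
              else 0)) :
    IndepFun (fun ω => C ω / (C ω + A ω)) (fun ω => C ω + A ω) P ∧
    Measure.map (fun ω => C ω / (C ω + A ω)) P
      = volume.withDensity (fun v => ENNReal.ofReal
          (if 0 < v ∧ v < 1 then ((m : ℝ) + 2 * n - 1) * v ^ (m + 2 * n - 2) else 0)) ∧
    (∃ c : ℝ, 0 < c ∧
      Measure.map (fun ω => C ω + A ω) P
        = volume.withDensity (fun w => ENNReal.ofReal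
            (if 0 < w then c * w ^ (m + 2 * n) * Real.exp (-w ^ 2 / 2) else 0))) ∧
    Measure.map (fun ω => (C ω + A ω) ^ 2) P
      = gammaMeasure (((m : ℝ) + 2 * n + 1) / 2) (1 / 2) :=
  stmt8_general P m n hn C A hCmeas hAmeas hdens
end

section
/- Suppose (M_1, M_2) is a random vector in (0,∞)² whose joint density with respect to Lebesgue measure is proportional to (m_1 + m_2) · exp(−(m_1 + m_2)²/2). Then (M_1, M_2) has the same distribution as (√Γ·U, √Γ·(1−U)), where Γ ~ Gamma(3/2, 1/2) and U is uniform on [0,1], independent of Γ. -/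
/-!
The map `(γ, u) ↦ (√γ u, √γ (1 - u))` is a diffeomorphism of `(0, ∞) × (0, 1)` onto `(0, ∞)²`
with constant Jacobian determinant `-1/2`, and the two coordinates of its value add up to `√γ`.
Hence it pushes `Gamma(3/2, 1/2) ⊗ Uniform[0, 1]`, whose density is proportional to
`γ^{1/2} e^{-γ/2}`, forward to a measure with density proportional to `(m₁ + m₂) e^{-(m₁ + m₂)²/2}`. Two probability measures whose densities
are proportional to the same function coincide.
-/

open MeasureTheory ProbabilityTheory Set Real
open scoped ENNReal

namespace MeasureTheory

lemma smul_eq_smul_of_isProbabilityMeasure {α : Type*} [MeasurableSpace α] {ν : Measure α}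
    {a b : ℝ≥0∞} [IsProbabilityMeasure (a • ν)] [IsProbabilityMeasure (b • ν)] :
    a • ν = b • ν := by
  have ha : a * ν univ = 1 := measure_univ (μ := a • ν)
  have hb : b * ν univ = 1 := measure_univ (μ := b • ν)
  rw [ENNReal.eq_inv_of_mul_eq_one_left ha, ENNReal.eq_inv_of_mul_eq_one_left hb]

theorem map_withDensity_restrict_eq_withDensity {E : Type*} [NormedAddCommGroup E]
    [NormedSpace ℝ E] [FiniteDimensional ℝ E] [MeasurableSpace E] [BorelSpace E]
    (μ : Measure E) [μ.IsAddHaarMeasure] {s : Set E} {f : E → E} {f' : E → E →L[ℝ] E}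
    {g h : E → ℝ≥0∞} (hs : MeasurableSet s) (hf : Measurable f)
    (hf' : ∀ x ∈ s, HasFDerivWithinAt f (f' x) s x) (hinj : InjOn f s)
    (hg : ∀ y ∉ f '' s, g y = 0) (hhg : ∀ x ∈ s, h x = ENNReal.ofReal |(f' x).det| * g (f x)) :
    Measure.map f ((μ.restrict s).withDensity h) = μ.withDensity g := by
  ext A hA
  have hfs : MeasurableSet (f '' s) := measurable_image_of_fderivWithin hs hf' hinj
  have hg_ind : g = (f '' s).indicator g := by
    funext y
    by_cases hy : y ∈ f '' s
    · rw [indicator_of_mem hy]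
    · rw [indicator_of_notMem hy, hg y hy]
  rw [Measure.map_apply hf hA, withDensity_apply _ (hf hA), withDensity_apply _ hA,
    Measure.restrict_restrict (hf hA), hg_ind, setLIntegral_indicator hfs, inter_comm,
    ← image_inter_preimage, lintegral_image_eq_lintegral_abs_det_fderiv_mul μ
      (hs.inter (hf hA)) (fun x hx ↦ (hf' x hx.1).mono inter_subset_left)
      (hinj.mono inter_subset_left)]
  exact setLIntegral_congr_fun (hs.inter (hf hA)) fun x hx ↦ hhg x hx.1

end MeasureTheory

namespace ProbabilityTheory

lemma gammaMeasure_eq_withDensity_restrict_Ioi (a r : ℝ) :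
    gammaMeasure a r = (volume.restrict (Ioi 0)).withDensity (gammaPDF a r) := by
  rw [gammaMeasure, Measure.restrict_congr_set Ioi_ae_eq_Ici,
    ← withDensity_indicator measurableSet_Ici]
  congr 1
  funext x
  by_cases hx : x ∈ Ici 0
  · rw [indicator_of_mem hx]
  · rw [indicator_of_notMem hx, gammaPDF_of_neg (not_le.mp hx)]

lemma gammaMeasure_prod_uniform (a r : ℝ) :
    (gammaMeasure a r).prod (volume.restrict (Icc (0 : ℝ) 1))
      = (volume.restrict (Ioi 0 ×ˢ Ioo 0 1)).withDensity fun z ↦ gammaPDF a r z.1 := by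
  rw [gammaMeasure_eq_withDensity_restrict_Ioi, ← Measure.restrict_congr_set Ioo_ae_eq_Icc,
    prod_withDensity_left (f := gammaPDF a r) (measurable_gammaPDFReal a r).ennreal_ofReal, Measure.prod_restrict,
    Measure.volume_eq_prod]

end ProbabilityTheory

noncomputable section

def splitMap (q : ℝ × ℝ) : ℝ × ℝ := (√q.1 * q.2, √q.1 * (1 - q.2))

def fderivSplitMap (q : ℝ × ℝ) : ℝ × ℝ →L[ℝ] ℝ × ℝ :=
  (Matrix.toLin (.finTwoProd ℝ) (.finTwoProd ℝ)
    !![q.2 / (2 * √q.1), √q.1; (1 - q.2) / (2 * √q.1), -√q.1]).toContinuousLinearMap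

def splitDomain : Set (ℝ × ℝ) := Ioi 0 ×ˢ Ioo 0 1

lemma measurableSet_splitDomain : MeasurableSet splitDomain :=
  measurableSet_Ioi.prod measurableSet_Ioo

@[fun_prop]
lemma continuous_splitMap : Continuous splitMap := by
  unfold splitMap
  fun_prop

lemma splitMap_fst_add_snd (q : ℝ × ℝ) : (splitMap q).1 + (splitMap q).2 = √q.1 := by
  simp only [splitMap]
  ring

lemma hasFDerivAt_splitMap {q : ℝ × ℝ} (hq : 0 < q.1) :
    HasFDerivAt splitMap (fderivSplitMap q) q := by
  have hsqrt : HasFDerivAt (fun p : ℝ × ℝ ↦ √p.1)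
      ((1 / (2 * √q.1)) • ContinuousLinearMap.fst ℝ ℝ ℝ) q :=
    (hasDerivAt_sqrt hq.ne').comp_hasFDerivAt q hasFDerivAt_fst
  rw [fderivSplitMap, Matrix.toLin_finTwoProd_toContinuousLinearMap]
  convert (hsqrt.mul hasFDerivAt_snd).prodMk
    (hsqrt.mul ((hasFDerivAt_const (1 : ℝ) q).sub hasFDerivAt_snd)) using 2 <;>
  · ext <;> simp [splitMap, smul_smul, div_eq_inv_mul, mul_comm]

lemma det_fderivSplitMap {q : ℝ × ℝ} (hq : 0 < q.1) : (fderivSplitMap q).det = -(1 / 2) := by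
  have : √q.1 ≠ 0 := (sqrt_pos.2 hq).ne'
  simp only [fderivSplitMap, LinearMap.det_toContinuousLinearMap, LinearMap.det_toLin,
    Matrix.det_fin_two_of]
  field_simp
  ring

lemma injOn_splitMap : InjOn splitMap splitDomain := by
  rintro ⟨a, u⟩ ⟨ha, -⟩ ⟨b, v⟩ ⟨hb, -⟩ h
  have hsqrt : √a = √b := by
    simpa only [splitMap_fst_add_snd] using congrArg (fun p : ℝ × ℝ ↦ p.1 + p.2) h
  have hab : a = b := (sqrt_inj (le_of_lt ha) (le_of_lt hb)).mp hsqrt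
  have huv : √a * u = √a * v := by
    simpa only [splitMap, hsqrt] using congrArg Prod.fst h
  rw [hab, mul_left_cancel₀ (sqrt_pos.2 ha).ne' huv]

lemma mem_image_splitMap {x y : ℝ} (hx : 0 < x) (hy : 0 < y) :
    (x, y) ∈ splitMap '' splitDomain := by
  have hxy : 0 < x + y := by linarith
  refine ⟨((x + y) ^ 2, x / (x + y)), ⟨mem_Ioi.2 (by positivity), by positivity,
    (div_lt_one hxy).2 (by linarith)⟩, ?_⟩
  simp only [splitMap, sqrt_sq hxy.le, Prod.mk.injEq]
  constructor
  · field_simp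
  · field_simp
    ring

def sumDensity (p : ℝ × ℝ) : ℝ≥0∞ :=
  ENNReal.ofReal (if 0 < p.1 ∧ 0 < p.2 then (p.1 + p.2) * exp (-(p.1 + p.2) ^ 2 / 2) else 0)

lemma ofReal_ite_const_mul_eq_smul_sumDensity {κ : ℝ} (hκ : 0 ≤ κ) :
    (fun p : ℝ × ℝ ↦ ENNReal.ofReal (if 0 < p.1 ∧ 0 < p.2
        then κ * (p.1 + p.2) * exp (-(p.1 + p.2) ^ 2 / 2) else 0))
      = ENNReal.ofReal κ • sumDensity := by
  funext p
  by_cases hp : 0 < p.1 ∧ 0 < p.2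
  · simp only [sumDensity, if_pos hp, Pi.smul_apply, smul_eq_mul, ← ENNReal.ofReal_mul hκ,
      mul_assoc]
  · simp [sumDensity, hp]

lemma sumDensity_splitMap {q : ℝ × ℝ} (hq : q ∈ splitDomain) :
    sumDensity (splitMap q) = ENNReal.ofReal (√q.1 * exp (-q.1 / 2)) := by
  obtain ⟨hγ, hu₀, hu₁⟩ := hq
  have hpos : 0 < (splitMap q).1 ∧ 0 < (splitMap q).2 :=
    ⟨mul_pos (sqrt_pos.2 hγ) hu₀, mul_pos (sqrt_pos.2 hγ) (by linarith)⟩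
  rw [sumDensity, if_pos hpos, splitMap_fst_add_snd, sq_sqrt (le_of_lt hγ)]

/-- The factor `2` is the inverse of the Jacobian `1/2` of `splitMap`. -/
def splitConst : ℝ := 2 * ((1 / 2 : ℝ) ^ (3 / 2 : ℝ) / Real.Gamma (3 / 2))

lemma gammaPDF_eq_abs_det_mul_sumDensity {q : ℝ × ℝ} (hq : q ∈ splitDomain) :
    gammaPDF (3 / 2) (1 / 2) q.1 = ENNReal.ofReal |(fderivSplitMap q).det|
      * (ENNReal.ofReal splitConst • sumDensity) (splitMap q) := by
  have hγ : 0 < q.1 := hq.1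
  rw [gammaPDF_of_nonneg (le_of_lt hγ), det_fderivSplitMap hγ, Pi.smul_apply, smul_eq_mul,
    sumDensity_splitMap hq, ← ENNReal.ofReal_mul' (by positivity),
    ← ENNReal.ofReal_mul (by positivity), show (3 / 2 - 1 : ℝ) = 1 / 2 by norm_num,
    ← sqrt_eq_rpow, splitConst]
  congr 1
  ring_nf

lemma map_splitMap_gammaMeasure_prod_uniform :
    Measure.map splitMap ((gammaMeasure (3 / 2) (1 / 2)).prod (volume.restrict (Icc (0 : ℝ) 1)))
      = ENNReal.ofReal splitConst • volume.withDensity sumDensity := by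
  rw [gammaMeasure_prod_uniform, ← withDensity_smul' _ _ ENNReal.ofReal_ne_top]
  refine map_withDensity_restrict_eq_withDensity volume measurableSet_splitDomain
    continuous_splitMap.measurable (fun q hq ↦ (hasFDerivAt_splitMap hq.1).hasFDerivWithinAt)
    injOn_splitMap (fun p hp ↦ ?_) (fun q hq ↦ gammaPDF_eq_abs_det_mul_sumDensity hq)
  have hp' : ¬ (0 < p.1 ∧ 0 < p.2) := fun h ↦ hp (mem_image_splitMap h.1 h.2)
  simp [sumDensity, hp']

end

/-- Let `(M_1, M_2)` be a random vector in `(0,∞)²` with joint density proportional to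
`(m_1 + m_2)·exp(-(m_1 + m_2)²/2)`.  Then `(M_1, M_2)` has the same distribution as
`(√Γ·U, √Γ·(1-U))` where `Γ ~ Gamma(3/2, 1/2)` and `U` is uniform on `[0,1]`,
independent of `Γ`. -/
theorem stmt11 {Ω : Type*} [MeasurableSpace Ω] (P : Measure Ω) [IsProbabilityMeasure P]
    (M : Ω → ℝ × ℝ) (hMmeas : Measurable M)
    (hdens : ∃ κ : ℝ, 0 < κ ∧
      Measure.map M P
        = (volume : Measure (ℝ × ℝ)).withDensity fun p =>
            ENNReal.ofReal (if 0 < p.1 ∧ 0 < p.2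
              then κ * (p.1 + p.2) * Real.exp (-(p.1 + p.2) ^ 2 / 2)
              else 0)) :
    Measure.map M P
      = Measure.map (fun q : ℝ × ℝ => (Real.sqrt q.1 * q.2, Real.sqrt q.1 * (1 - q.2)))
          ((gammaMeasure (3 / 2) (1 / 2)).prod (volume.restrict (Set.Icc (0 : ℝ) 1))) := by
  obtain ⟨κ, hκ, hM⟩ := hdens
  have hT := map_splitMap_gammaMeasure_prod_uniform
  rw [ofReal_ite_const_mul_eq_smul_sumDensity hκ.le,
    withDensity_smul' _ _ ENNReal.ofReal_ne_top] at hM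
  have : IsProbabilityMeasure (gammaMeasure (3 / 2 : ℝ) (1 / 2)) :=
    isProbabilityMeasure_gammaMeasure (by norm_num) (by norm_num)
  have : IsProbabilityMeasure (volume.restrict (Icc (0 : ℝ) 1)) :=
    ⟨by simp⟩
  have : IsProbabilityMeasure (ENNReal.ofReal κ • volume.withDensity sumDensity) :=
    hM ▸ Measure.isProbabilityMeasure_map hMmeas.aemeasurable
  have : IsProbabilityMeasure (ENNReal.ofReal splitConst • volume.withDensity sumDensity) :=
    hT ▸ Measure.isProbabilityMeasure_map continuous_splitMap.aemeasurable
  exact hM.trans (smul_eq_smul_of_isProbabilityMeasure.trans hT.symm)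
end

section
/- Fix an integer m ≥ 1. Let (W_n)_{n ≥ 0} be a sequence of positive random variables on a common probability space such that almost surely W_n ≤ W_{n+1} for all n, and such that for every n the random variable W_n² has the Gamma((m+2n+1)/2, 1/2) distribution. Then W_n / √(m+2n+1) → 1 almost surely as n → ∞. -/
/-!
Chernoff's bound with the Gamma moment generating function shows that a `Gamma(a, r)` variable
`X` satisfies `P(δ X ≥ δ (1 + δ) a / r) ≤ ((1 + δ) e^{-δ})^a` for every `δ > -1`, and
`(1 + δ) e^{-δ} < 1` for `δ ≠ 0`. Since the shapes `(m + 2n + 1) / 2` grow linearly, these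
probabilities are summable in `n`, so by Borel–Cantelli `W_n² / (m + 2n + 1)` eventually lies in
`(1 - ε, 1 + ε)` almost surely, for each `ε`. Positivity of `W_n` lets one take square roots.
-/

open MeasureTheory ProbabilityTheory Filter Real

lemma measure_mul_le_mul_le_exp_mul_lintegral (μ : Measure ℝ) (t c : ℝ) :
    μ {x | t * c ≤ t * x}
      ≤ ENNReal.ofReal (exp (-(t * c))) * ∫⁻ x, ENNReal.ofReal (exp (t * x)) ∂μ := by
  calc μ {x | t * c ≤ t * x}
      ≤ μ {x | ENNReal.ofReal (exp (t * c)) ≤ ENNReal.ofReal (exp (t * x))} :=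
        measure_mono fun x hx => ENNReal.ofReal_le_ofReal (exp_le_exp.2 hx)
    _ ≤ (∫⁻ x, ENNReal.ofReal (exp (t * x)) ∂μ) / ENNReal.ofReal (exp (t * c)) :=
        meas_ge_le_lintegral_div (by fun_prop) (by positivity) ENNReal.ofReal_ne_top
    _ = _ := by
        rw [ENNReal.div_eq_inv_mul, ← ENNReal.ofReal_inv_of_pos (exp_pos _), exp_neg]

lemma gammaPDF_mul_exp_mul {a r t : ℝ} (ha : 0 < a) (hr : 0 < r) (ht : t < r) (x : ℝ) :
    gammaPDF a r x * ENNReal.ofReal (exp (t * x))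
      = ENNReal.ofReal ((r / (r - t)) ^ a) * gammaPDF a (r - t) x := by
  have hrt : 0 < r - t := by linarith
  rcases le_or_gt 0 x with hx | hx
  · rw [gammaPDF_of_nonneg hx, gammaPDF_of_nonneg hx,
      ← ENNReal.ofReal_mul (by positivity), ← ENNReal.ofReal_mul (by positivity)]
    congr 1
    have h_exp : exp (-(r * x)) * exp (t * x) = exp (-((r - t) * x)) := by
      rw [← exp_add]; ring_nf
    have h_pow : (r / (r - t)) ^ a * (r - t) ^ a = r ^ a := by
      rw [div_rpow hr.le hrt.le, div_mul_cancel₀ _ (rpow_pos_of_pos hrt a).ne']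
    rw [← h_pow, ← h_exp]
    ring
  · rw [gammaPDF_of_neg hx, gammaPDF_of_neg hx, zero_mul, mul_zero]

lemma lintegral_exp_mul_gammaMeasure {a r t : ℝ} (ha : 0 < a) (hr : 0 < r) (ht : t < r) :
    ∫⁻ x, ENNReal.ofReal (exp (t * x)) ∂gammaMeasure a r
      = ENNReal.ofReal ((r / (r - t)) ^ a) := by
  have h_meas (r : ℝ) : Measurable (gammaPDF a r) := (measurable_gammaPDFReal a r).ennreal_ofReal
  rw [gammaMeasure, lintegral_withDensity_eq_lintegral_mul _ (h_meas r) (by fun_prop)]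
  simp only [Pi.mul_apply, gammaPDF_mul_exp_mul ha hr ht]
  rw [lintegral_const_mul _ (h_meas _),
    lintegral_gammaPDF_eq_one ha (by linarith), mul_one]

lemma gammaMeasure_deviation_le {a r δ : ℝ} (ha : 0 < a) (hr : 0 < r) (hδ : -1 < δ) :
    gammaMeasure a r {x | δ * ((1 + δ) * (a / r)) ≤ δ * x}
      ≤ ENNReal.ofReal (((1 + δ) * exp (-δ)) ^ a) := by
  have hδ' : 0 < 1 + δ := by linarith
  set c := (1 + δ) * (a / r)
  -- the minimiser of `t ↦ e^{-tc} (r / (r - t))^a`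
  set t := r / (1 + δ) * δ
  have ht : t < r := by simp only [t]; rw [div_mul_eq_mul_div, div_lt_iff₀ hδ']; nlinarith
  have h_exponent : t * c = δ * a := by simp only [t, c]; field_simp
  have h_ratio : r / (r - t) = 1 + δ := by
    rw [div_eq_iff (by linarith)]; simp only [t]; field_simp; ring
  calc gammaMeasure a r {x | δ * c ≤ δ * x}
      ≤ gammaMeasure a r {x | t * c ≤ t * x} := by
        refine measure_mono fun x (hx : δ * c ≤ δ * x) => ?_
        show t * c ≤ t * x
        simp only [t, mul_assoc]
        exact mul_le_mul_of_nonneg_left hx (by positivity)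
    _ ≤ ENNReal.ofReal (exp (-(δ * a))) * ENNReal.ofReal ((1 + δ) ^ a) := by
        rw [← h_exponent, ← h_ratio, ← lintegral_exp_mul_gammaMeasure ha hr ht]
        exact measure_mul_le_mul_le_exp_mul_lintegral _ t c
    _ = ENNReal.ofReal (((1 + δ) * exp (-δ)) ^ a) := by
        rw [← ENNReal.ofReal_mul (exp_pos _).le, mul_rpow hδ'.le (exp_pos _).le, ← exp_mul,
          mul_comm]
        ring_nf

lemma add_one_mul_exp_neg_lt_one {δ : ℝ} (hδ : δ ≠ 0) : (1 + δ) * exp (-δ) < 1 := by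
  have h := mul_lt_mul_of_pos_right (add_one_lt_exp hδ) (exp_pos (-δ))
  rwa [← exp_add, add_neg_cancel, exp_zero, add_comm] at h

lemma tsum_ofReal_rpow_ne_top {q : ℝ} (hq0 : 0 < q) (hq1 : q < 1) {a : ℕ → ℝ}
    (ha : ∀ n : ℕ, n ≤ a n) : ∑' n, ENNReal.ofReal (q ^ a n) ≠ ⊤ := by
  have h_le (n : ℕ) : ENNReal.ofReal (q ^ a n) ≤ ENNReal.ofReal (q ^ n) := by
    rw [← rpow_natCast]
    exact ENNReal.ofReal_le_ofReal (rpow_le_rpow_of_exponent_ge hq0 hq1.le (ha n))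
  refine ne_top_of_le_ne_top ?_ (ENNReal.tsum_le_tsum h_le)
  rw [← ENNReal.ofReal_tsum_of_nonneg (fun n => by positivity)
    (summable_geometric_of_lt_one hq0.le hq1)]
  exact ENNReal.ofReal_ne_top

lemma tendsto_of_forall_eventually_dist_lt {α β ι : Type*} [PseudoMetricSpace β] {l : Filter α}
    {L : Filter ι} [L.NeBot] {u : α → β} {x : β} {ε : ι → ℝ} (hε : Tendsto ε L (nhds 0))
    (h : ∀ k, ∀ᶠ n in l, dist (u n) x < ε k) : Tendsto u l (nhds x) := by
  refine Metric.tendsto_nhds.2 fun δ hδ => ?_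
  obtain ⟨k, hk⟩ := (hε.eventually (gt_mem_nhds hδ)).exists
  exact (h k).mono fun n hn => hn.trans hk

section GammaSequence

variable {Ω : Type*} [MeasurableSpace Ω] {P : Measure Ω} {X : ℕ → Ω → ℝ} {a : ℕ → ℝ} {r : ℝ}

lemma ae_eventually_mul_lt_of_map_eq_gammaMeasure
    (hlaw : ∀ n, P.map (X n) = gammaMeasure (a n) r) (ha_pos : ∀ n, 0 < a n)
    (ha : ∀ n : ℕ, n ≤ a n) (hr : 0 < r) {δ : ℝ} (hδ : -1 < δ) (hδ0 : δ ≠ 0) :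
    ∀ᵐ ω ∂P, ∀ᶠ n in atTop, δ * X n ω < δ * ((1 + δ) * (a n / r)) := by
  -- a map that is not a.e. measurable pushes `P` forward to `0`
  have h_meas (n : ℕ) : AEMeasurable (X n) P := by
    have := isProbabilityMeasure_gammaMeasure (ha_pos n) hr
    exact .of_map_ne_zero (hlaw n ▸ IsProbabilityMeasure.ne_zero _)
  have h_bound (n : ℕ) : P {ω | δ * ((1 + δ) * (a n / r)) ≤ δ * X n ω}
      ≤ ENNReal.ofReal (((1 + δ) * exp (-δ)) ^ a n) := by
    rw [← Set.preimage_ofPred_eq (p := fun x => δ * ((1 + δ) * (a n / r)) ≤ δ * x),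
      ← Measure.map_apply_of_aemeasurable (h_meas n)
        (measurableSet_le measurable_const (measurable_const_mul δ)), hlaw n]
    exact gammaMeasure_deviation_le (ha_pos n) hr hδ
  have h_sum : ∑' n, P {ω | δ * ((1 + δ) * (a n / r)) ≤ δ * X n ω} ≠ ⊤ :=
    ne_top_of_le_ne_top (tsum_ofReal_rpow_ne_top (by nlinarith [exp_pos (-δ)])
      (add_one_mul_exp_neg_lt_one hδ0) ha) (ENNReal.tsum_le_tsum h_bound)
  filter_upwards [ae_eventually_notMem h_sum] with ω hω
  exact hω.mono fun n hn => not_le.1 hn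

lemma ae_tendsto_div_of_map_eq_gammaMeasure
    (hlaw : ∀ n, P.map (X n) = gammaMeasure (a n) r) (ha_pos : ∀ n, 0 < a n)
    (ha : ∀ n : ℕ, n ≤ a n) (hr : 0 < r) :
    ∀ᵐ ω ∂P, Tendsto (fun n => X n ω / (a n / r)) atTop (nhds 1) := by
  have h_dev {ε : ℝ} (hε0 : 0 < ε) (hε1 : ε < 1) :
      ∀ᵐ ω ∂P, ∀ᶠ n in atTop, dist (X n ω / (a n / r)) 1 < ε := by
    filter_upwards [ae_eventually_mul_lt_of_map_eq_gammaMeasure hlaw ha_pos ha hr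
        (by linarith) hε0.ne',
      ae_eventually_mul_lt_of_map_eq_gammaMeasure hlaw ha_pos ha hr (δ := -ε)
        (by linarith) (neg_ne_zero.2 hε0.ne')] with ω h_upper h_lower
    filter_upwards [h_upper, h_lower] with n hu hl
    have hb : 0 < a n / r := div_pos (ha_pos n) hr
    rw [dist_eq, abs_sub_lt_iff, sub_lt_iff_lt_add', div_lt_iff₀ hb, sub_lt_comm,
      lt_div_iff₀ hb]
    constructor <;> nlinarith
  have h_half : Tendsto (fun k : ℕ => (2⁻¹ : ℝ) ^ (k + 1)) atTop (nhds 0) :=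
    (tendsto_pow_atTop_nhds_zero_of_lt_one (by norm_num) (by norm_num)).comp
      (tendsto_add_atTop_nat 1)
  filter_upwards [ae_all_iff.2 fun k : ℕ =>
    h_dev (ε := 2⁻¹ ^ (k + 1)) (by positivity) (pow_lt_one₀ (by norm_num) (by norm_num)
      (by omega))] with ω hω
  exact tendsto_of_forall_eventually_dist_lt h_half hω

end GammaSequence

theorem stmt14_general {Ω : Type*} [MeasurableSpace Ω] (P : Measure Ω)
    (m : ℕ) (W : ℕ → Ω → ℝ)
    (hpos : ∀ᵐ ω ∂P, ∀ n, 0 < W n ω)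
    (hlaw : ∀ n, Measure.map (fun ω => (W n ω) ^ 2) P
      = gammaMeasure (((m : ℝ) + 2 * n + 1) / 2) (1 / 2)) :
    ∀ᵐ ω ∂P, Tendsto (fun n => W n ω / Real.sqrt ((m : ℝ) + 2 * n + 1))
      atTop (nhds 1) := by
  have h_mean (n : ℕ) : ((m : ℝ) + 2 * n + 1) / 2 / (1 / 2) = m + 2 * n + 1 := by ring
  filter_upwards [hpos, ae_tendsto_div_of_map_eq_gammaMeasure (X := fun n ω => W n ω ^ 2) hlaw
    (fun n => by positivity) (fun n => by linarith [m.cast_nonneg (α := ℝ)]) (by norm_num)]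
    with ω hω_pos hω
  simp only [h_mean] at hω
  have h_sqrt := (continuous_sqrt.tendsto 1).comp hω
  rw [sqrt_one] at h_sqrt
  refine h_sqrt.congr fun n => ?_
  rw [Function.comp_apply, sqrt_div (sq_nonneg _), sqrt_sq (hω_pos n).le]

/-- Let `m ≥ 1` and let `(W_n)` be positive random variables, almost surely
non-decreasing in `n`, with `W_n² ~ Gamma((m+2n+1)/2, 1/2)` for every `n`.  Then
`W_n / √(m+2n+1) → 1` almost surely. -/
theorem stmt14 {Ω : Type*} [MeasurableSpace Ω] (P : Measure Ω) [IsProbabilityMeasure P]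
    (m : ℕ) (hm : 1 ≤ m) (W : ℕ → Ω → ℝ)
    (hWmeas : ∀ n, Measurable (W n))
    (hpos : ∀ᵐ ω ∂P, ∀ n, 0 < W n ω)
    (hmono : ∀ᵐ ω ∂P, ∀ n, W n ω ≤ W (n + 1) ω)
    (hlaw : ∀ n, Measure.map (fun ω => (W n ω) ^ 2) P
      = gammaMeasure (((m : ℝ) + 2 * n + 1) / 2) (1 / 2)) :
    ∀ᵐ ω ∂P, Tendsto (fun n => W n ω / Real.sqrt ((m : ℝ) + 2 * n + 1))
      atTop (nhds 1) :=
  stmt14_general P m W hpos hlaw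
end
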